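/- Let T = ℤ[s,t]/(s² − 2s, t² − 4t, st − 2t). Then the ideal of T generated by the two elements t − 2s and −t + 3s − 2 equals the kernel of the (well-defined) ring homomorphism T → ℤ determined by s ↦ 2 and t ↦ 4. -/

import Mathlib

/-!
Evaluation at the point `(s, t) = (2, 4)` kills the three relations, so it descends to `T`, and
every ring map `T → ℤ` with `s ↦ 2, t ↦ 4` pulls back to it on `ℤ[s, t]`. The kernel of
evaluation at a point is generated by `s - 2` and `t - 4`, so `ker φ` is the image of that ideal
in `T`; the two given generators differ from `s - 2, t - 4` by a unimodular change of basis.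
-/

open MvPolynomial

noncomputable section

/-- Presentation of the Burnside ring `A(C₄) = ℤ[s,t]/(s² - 2s, t² - 4t, st - 2t)`,
with `X 0 = s = [C₄/C₂]` and `X 1 = t = [C₄/e]`. -/
def relT : Ideal (MvPolynomial (Fin 2) ℤ) :=
  Ideal.span {X 0 ^ 2 - 2 * X 0, X 1 ^ 2 - 4 * X 1, X 0 * X 1 - 2 * X 1}

abbrev T : Type := MvPolynomial (Fin 2) ℤ ⧸ relT

def sT : T := Ideal.Quotient.mk relT (X 0)
def tT : T := Ideal.Quotient.mk relT (X 1)

namespace MvPolynomial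

variable {R σ : Type*} [CommRing R]

theorem sub_C_eval_mem_span (v : σ → R) (p : MvPolynomial σ R) :
    p - C (eval v p) ∈ Ideal.span (Set.range fun i => X i - C (v i)) := by
  set I := Ideal.span (Set.range fun i => X i - C (v i))
  have hmk : (Ideal.Quotient.mk I).comp (C.comp (eval v)) = Ideal.Quotient.mk I :=
    ringHom_ext (fun r => by simp) fun i => by
      simpa [Ideal.Quotient.eq] using I.neg_mem (Ideal.subset_span ⟨i, rfl⟩)
  exact Ideal.Quotient.eq.mp (DFunLike.congr_fun hmk p).symm

theorem ker_eval_eq_span (v : σ → R) :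
    RingHom.ker (eval v) = Ideal.span (Set.range fun i => X i - C (v i)) := by
  refine le_antisymm (fun p hp => ?_) (Ideal.span_le.mpr ?_)
  · simpa [RingHom.mem_ker.mp hp] using sub_C_eval_mem_span v p
  · rintro _ ⟨i, rfl⟩
    simp

end MvPolynomial

/-- `(t - 2s, -t + 3s - 2)` is `(t - 4, s - 2)` times `!![1, -1; -2, 3]`, of determinant `1`. -/
theorem Ideal.span_pair_eq_span_sub_two_sub_four {R : Type*} [CommRing R] (s t : R) :
    Ideal.span {t - 2 * s, -t + 3 * s - 2} = Ideal.span {s - 2, t - 4} := by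
  refine le_antisymm (Ideal.span_le.mpr ?_) (Ideal.span_le.mpr ?_) <;>
    rintro _ (rfl | rfl) <;> rw [SetLike.mem_coe, Ideal.mem_span_pair]
  exacts [⟨-2, 1, by ring⟩, ⟨3, -1, by ring⟩, ⟨1, 1, by ring⟩, ⟨3, 2, by ring⟩]

theorem relT_le_ker_eval : relT ≤ RingHom.ker (eval ![2, 4]) := by
  rw [relT, Ideal.span_le]
  rintro _ (rfl | rfl | rfl) <;> simp

theorem comp_mk_eq_eval (φ : T →+* ℤ) (hs : φ sT = 2) (ht : φ tT = 4) :
    φ.comp (Ideal.Quotient.mk relT) = eval ![2, 4] :=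
  ringHom_ext (fun r => by simp) fun i => by fin_cases i <;> simpa

theorem ker_eq_span_sT_sub_two_tT_sub_four (φ : T →+* ℤ) (hs : φ sT = 2) (ht : φ tT = 4) :
    RingHom.ker φ = Ideal.span {sT - 2, tT - 4} := by
  rw [← Ideal.map_comap_of_surjective _ Ideal.Quotient.mk_surjective (RingHom.ker φ),
    RingHom.comap_ker, comp_mk_eq_eval φ hs ht, ker_eval_eq_span, Ideal.map_span,
    ← Set.range_comp]
  congr 1
  ext x
  simp [Fin.exists_fin_two, sT, tT, eq_comm]

theorem stmt4 :
    (∃ φ : T →+* ℤ, φ sT = 2 ∧ φ tT = 4) ∧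
    (∀ φ : T →+* ℤ, (φ sT = 2 ∧ φ tT = 4) →
      Ideal.span {tT - 2 * sT, -tT + 3 * sT - 2} = RingHom.ker φ) := by
  refine ⟨⟨Ideal.Quotient.lift relT (eval ![2, 4])
      fun _ ha => RingHom.mem_ker.mp (relT_le_ker_eval ha), ?_, ?_⟩, fun φ ⟨hs, ht⟩ => ?_⟩
  · simp [sT]
  · simp [tT]
  · rw [ker_eq_span_sT_sub_two_tT_sub_four φ hs ht, Ideal.span_pair_eq_span_sub_two_sub_four]
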